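/- arXiv:2409.18045 — 2 statements merged into one kernel-verified Lean document; each statement's English description precedes it below -/
import Mathlib

section
/- Let μ, (p_n) and K be as in the context and let ξ ∈ ℝ. Assume there exist a regularly varying function ℎ with index ρ > 0 and a function K_∞ : ℂ×ℂ → ℂ not identically 1 such that K(t, ξ + z/ℎ(K(t,ξ,ξ)), ξ + w/ℎ(K(t,ξ,ξ)))/K(t,ξ,ξ) → K_∞(z,w) as t → ∞ (t real), uniformly on compact subsets of ℂ×ℂ. Then K(n+1,ξ,ξ)/K(n,ξ,ξ) → 1 as n → ∞. -/
open MeasureTheory Filter Topology Polynomial ComplexConjugate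

set_option maxHeartbeats 1000000

noncomputable section

/-- `g` is regularly varying at `∞` with index `β`. -/
def RegularlyVarying (g : ℝ → ℝ) (β : ℝ) : Prop :=
  (∀ x : ℝ, 0 < x → 0 < g x) ∧
    ∀ c : ℝ, 0 < c → Tendsto (fun r : ℝ => g (c * r) / g r) atTop (nhds (c ^ β))

/-- `h` is an asymptotic inverse of `g`. -/
def AsymptoticInverse (h g : ℝ → ℝ) : Prop :=
  Tendsto (fun r : ℝ => h (g r) / r) atTop (nhds 1) ∧
    Tendsto (fun r : ℝ => g (h r) / r) atTop (nhds 1)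

/-- The support of `μ` is an infinite set. -/
def HasInfiniteSupport (μ : Measure ℝ) : Prop :=
  ∀ s : Finset ℝ, μ ((↑s : Set ℝ)ᶜ) ≠ 0

/-- All absolute moments of `μ` are finite. -/
def HasFiniteMoments (μ : Measure ℝ) : Prop :=
  ∀ n : ℕ, Integrable (fun x : ℝ => |x| ^ n) μ

/-- `μ` has a determinate (Hamburger) moment problem. -/
def IsDeterminate (μ : Measure ℝ) : Prop :=
  ∀ μ' : Measure ℝ, (∀ n : ℕ, Integrable (fun x : ℝ => x ^ n) μ') →
    (∀ n : ℕ, ∫ x, x ^ n ∂μ' = ∫ x, x ^ n ∂μ) → μ' = μ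

/-- `p` is the sequence of orthonormal polynomials of `μ`. -/
def IsOrthonormalPolys (μ : Measure ℝ) (p : ℕ → Polynomial ℝ) : Prop :=
  (∀ n : ℕ, (p n).degree = (n : WithBot ℕ)) ∧ (∀ n, 0 < (p n).leadingCoeff) ∧
    ∀ m n, ∫ x, (p m).eval x * (p n).eval x ∂μ = if m = n then 1 else 0

/-- The Christoffel–Darboux kernel. -/
def CD (p : ℕ → Polynomial ℝ) (n : ℕ) (z w : ℂ) : ℂ :=
  ∑ j ∈ Finset.range n, aeval z (p j) * conj (aeval w (p j))

/-- The diagonal of the Christoffel–Darboux kernel at a real point. -/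
def CDdiag (p : ℕ → Polynomial ℝ) (n : ℕ) (ξ : ℝ) : ℝ :=
  ∑ j ∈ Finset.range n, (p j).eval ξ ^ 2

/-- The linearly interpolated Christoffel–Darboux kernel. -/
def CDt (p : ℕ → Polynomial ℝ) (t : ℝ) (z w : ℂ) : ℂ :=
  CD p ⌊t⌋₊ z w + ((t - ⌊t⌋₊ : ℝ) : ℂ) * (CD p (⌊t⌋₊ + 1) z w - CD p ⌊t⌋₊ z w)

/-- The linearly interpolated diagonal CD kernel. -/
def CDdiagT (p : ℕ → Polynomial ℝ) (t : ℝ) (ξ : ℝ) : ℝ :=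
  CDdiag p ⌊t⌋₊ ξ + (t - ⌊t⌋₊) * (CDdiag p (⌊t⌋₊ + 1) ξ - CDdiag p ⌊t⌋₊ ξ)

/-- The sine kernel. -/
def sineKernel (z w : ℂ) : ℂ :=
  if z = conj w then 1
  else Complex.sin ((Real.pi : ℂ) * (z - conj w)) / ((Real.pi : ℂ) * (z - conj w))

/-- Convergence, uniformly on compact subsets of `ℂ × ℂ`. -/
def TendstoUnifCompacts {ι : Type*} (l : Filter ι) (F : ι → ℂ × ℂ → ℂ) (K : ℂ × ℂ → ℂ) : Prop :=
  ∀ S : Set (ℂ × ℂ), IsCompact S → TendstoUniformlyOn F K l S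

/-- The rescaled interpolated CD kernel, rescaled at `ξ` at scale `h(K(t,ξ,ξ))`. -/
def CDscaledT (p : ℕ → Polynomial ℝ) (ξ : ℝ) (h : ℝ → ℝ) : ℝ → ℂ × ℂ → ℂ :=
  fun t zw =>
    CDt p t ((ξ : ℂ) + zw.1 / (h (CDdiagT p t ξ) : ℂ))
      ((ξ : ℂ) + zw.2 / (h (CDdiagT p t ξ) : ℂ)) / ((CDdiagT p t ξ : ℝ) : ℂ)

/-- The rescaled CD kernel (integer index). -/
def CDscaledN (p : ℕ → Polynomial ℝ) (ξ : ℝ) (h : ℝ → ℝ) : ℕ → ℂ × ℂ → ℂ :=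
  fun n zw =>
    CD p n ((ξ : ℂ) + zw.1 / (h (CDdiag p n ξ) : ℂ))
      ((ξ : ℂ) + zw.2 / (h (CDdiag p n ξ) : ℂ)) / ((CDdiag p n ξ : ℝ) : ℂ)

/-- The Nevai-type condition `K(n+1,ξ,ξ)/K(n,ξ,ξ) → 1`. -/
def NevaiCond (p : ℕ → Polynomial ℝ) (ξ : ℝ) : Prop :=
  Tendsto (fun n : ℕ => CDdiag p (n + 1) ξ / CDdiag p n ξ) atTop (nhds 1)

/-- One-sided scaled limits of the measure of intervals at `ξ`. -/
def MeasureEdgeLimits (μ : Measure ℝ) (ξ : ℝ) (g : ℝ → ℝ) (σm σp : ℝ) : Prop :=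
  Tendsto (fun r : ℝ => g r * (μ (Set.Ioo (ξ - 1 / r) ξ)).toReal) atTop (nhds σm) ∧
    Tendsto (fun r : ℝ => g r * (μ (Set.Ico ξ (ξ + 1 / r))).toReal) atTop (nhds σp)

/-- `ν` is a tangent measure of `μ` at `ξ`. -/
def IsTangentAt (μ : Measure ℝ) (ξ : ℝ) (ν : Measure ℝ) : Prop :=
  IsLocallyFiniteMeasure ν ∧ ν Set.univ ≠ 0 ∧
    ∃ c r : ℕ → ℝ, (∀ n, 0 < c n) ∧ Tendsto r atTop atTop ∧
      ∀ f : ℝ → ℝ, Continuous f → HasCompactSupport f →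
        Tendsto (fun n => ∫ x, f x ∂(ENNReal.ofReal (c n) • μ.map (fun x => r n * (x - ξ))))
          atTop (nhds (∫ x, f x ∂ν))

/-- The set of tangent measures of `μ` at `ξ`. -/
def TangentSet (μ : Measure ℝ) (ξ : ℝ) : Set (Measure ℝ) := {ν | IsTangentAt μ ξ ν}

/-- The rising factorial `(a)_n`. -/
def risingFactorial (a : ℂ) : ℕ → ℂ
  | 0 => 1
  | n + 1 => risingFactorial a n * (a + n)

/-- Kummer's confluent hypergeometric function `M(a,b,z)`. -/
def kummerM (a b z : ℂ) : ℂ :=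
  ∑' n : ℕ, risingFactorial a n / (risingFactorial b n * (n.factorial : ℂ)) * z ^ n

/-- The confluent hypergeometric function `₀F₁(b,z)`. -/
def hyp0F1 (b z : ℂ) : ℂ :=
  ∑' n : ℕ, (risingFactorial b n * (n.factorial : ℂ))⁻¹ * z ^ n

/-- The entire function `A` from the definition of the limit kernel. -/
def limitA (σm σp β : ℝ) : ℂ → ℂ :=
  if 0 < σp ∧ 0 < σm then
    fun z =>
      let α : ℂ := Complex.I / (2 * (Real.pi : ℂ)) * (Real.log (σm / σp) : ℂ) + ((β : ℂ) - 1) / 2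
      let κ : ℝ := 1 / 2 * (2 * Real.Gamma (β + 1) ^ 2 * Real.sqrt (σp * σm) /
        ‖Complex.Gamma (α + 1)‖ ^ 2) ^ (1 / β)
      Complex.exp (Complex.I * (κ : ℂ) * z) *
        (kummerM α (β : ℂ) (-2 * Complex.I * (κ : ℂ) * z) +
          kummerM (α + 1) (β : ℂ) (-2 * Complex.I * (κ : ℂ) * z)) / 2
  else
    fun z =>
      let σ : ℝ := if 0 < σp then (σp / Real.pi * Real.Gamma (β + 1) ^ 2) ^ (1 / β)
        else -((σm / Real.pi * Real.Gamma (β + 1) ^ 2) ^ (1 / β))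
      hyp0F1 (β : ℂ) (-(σ : ℂ) * z)

/-- The entire function `B` from the definition of the limit kernel. -/
def limitB (σm σp β : ℝ) : ℂ → ℂ :=
  if 0 < σp ∧ 0 < σm then
    fun z =>
      let α : ℂ := Complex.I / (2 * (Real.pi : ℂ)) * (Real.log (σm / σp) : ℂ) + ((β : ℂ) - 1) / 2
      let κ : ℝ := 1 / 2 * (2 * Real.Gamma (β + 1) ^ 2 * Real.sqrt (σp * σm) /
        ‖Complex.Gamma (α + 1)‖ ^ 2) ^ (1 / β)
      z * Complex.exp (Complex.I * (κ : ℂ) * z) *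
        kummerM (α + 1) ((β : ℂ) + 1) (-2 * Complex.I * (κ : ℂ) * z)
  else
    fun z =>
      let σ : ℝ := if 0 < σp then (σp / Real.pi * Real.Gamma (β + 1) ^ 2) ^ (1 / β)
        else -((σm / Real.pi * Real.Gamma (β + 1) ^ 2) ^ (1 / β))
      z * hyp0F1 ((β : ℂ) + 1) (-(σ : ℂ) * z)

/-- The limit kernel `K_{σ₋,σ₊,β}`, extended to the diagonal by continuity. -/
def limitKernel (σm σp β : ℝ) (z w : ℂ) : ℂ :=
  if z = conj w then
    deriv (limitB σm σp β) z * limitA σm σp β z - deriv (limitA σm σp β) z * limitB σm σp β z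
  else
    (limitB σm σp β z * limitA σm σp β (conj w) - limitA σm σp β z * limitB σm σp β (conj w)) /
      (z - conj w)

/-- The entire function `F_ν` whose positive zeros are those of the Bessel function `J_ν`. -/
def besselF (ν : ℝ) (z : ℂ) : ℂ :=
  ∑' n : ℕ, (-1 : ℂ) ^ n / ((n.factorial : ℂ) * Complex.Gamma ((n : ℂ) + (ν : ℂ) + 1)) *
    (z / 2) ^ (2 * n)

/-- The `(k+1)`-st smallest element of a set of reals (when meaningful). -/
def nthSmall (S : Set ℝ) : ℕ → ℝ
  | 0 => sInf S
  | k + 1 => sInf (S ∩ Set.Ioi (nthSmall S k))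

/-- The `(k+1)`-st largest element of a set of reals (when meaningful). -/
def nthLarge (S : Set ℝ) : ℕ → ℝ
  | 0 => sSup S
  | k + 1 => sSup (S ∩ Set.Iio (nthLarge S k))

/-- `S` contains at least `k` elements. -/
def HasAtLeastCard (S : Set ℝ) (k : ℕ) : Prop :=
  ∃ f : Fin k → ℝ, StrictMono f ∧ ∀ i, f i ∈ S

/-- The measure on `ℝ` with power-law density on both half-lines. -/
def powerMeasure (σm σp β : ℝ) : Measure ℝ :=
  volume.withDensity fun t =>
    if 0 < t then ENNReal.ofReal (σp * β * t ^ (β - 1))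
    else if t < 0 then ENNReal.ofReal (σm * β * |t| ^ (β - 1)) else 0


-- ### auxiliary lemmas

private lemma aeval_ofReal' (q : Polynomial ℝ) (x : ℝ) :
    aeval ((x : ℝ) : ℂ) q = ((q.eval x : ℝ) : ℂ) := by
  rw [← Complex.coe_algebraMap, Polynomial.aeval_algebraMap_apply_eq_algebraMap_eval]

private lemma diff_aeval (q : Polynomial ℝ) : Differentiable ℂ fun x : ℂ => aeval x q := by
  have : (fun x : ℂ => aeval x q) = fun x => (q.map (algebraMap ℝ ℂ)).eval x := by
    funext x; rw [Polynomial.aeval_def, Polynomial.eval_map]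
  rw [this]; exact (q.map _).differentiable

private lemma cont_aeval (q : Polynomial ℝ) : Continuous fun x : ℂ => aeval x q :=
  (diff_aeval q).continuous

/-- holomorphic version of the CD kernel -/
private def CDh (p : ℕ → Polynomial ℝ) (n : ℕ) (z w : ℂ) : ℂ :=
  ∑ j ∈ Finset.range n, aeval z (p j) * aeval w (p j)

private def CDth (p : ℕ → Polynomial ℝ) (t : ℝ) (z w : ℂ) : ℂ :=
  CDh p ⌊t⌋₊ z w + ((t - ⌊t⌋₊ : ℝ) : ℂ) * (CDh p (⌊t⌋₊ + 1) z w - CDh p ⌊t⌋₊ z w)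

private lemma cd_eq_cdh (p : ℕ → Polynomial ℝ) (n : ℕ) (z w : ℂ) :
    CD p n z w = CDh p n z (conj w) := by
  unfold CD CDh
  refine Finset.sum_congr rfl fun j _ => ?_
  rw [Polynomial.aeval_conj]

private lemma cdt_eq_cdth (p : ℕ → Polynomial ℝ) (t : ℝ) (z w : ℂ) :
    CDt p t z w = CDth p t z (conj w) := by
  unfold CDt CDth
  rw [cd_eq_cdh, cd_eq_cdh]

private lemma cdh_diff (p : ℕ → Polynomial ℝ) (n : ℕ) (A B m₁ m₂ : ℂ) :
    Differentiable ℂ (fun ζ => CDh p n (A + ζ * m₁) (B + ζ * m₂)) := by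
  unfold CDh
  apply Differentiable.fun_sum
  intro j _
  exact ((diff_aeval (p j)).comp ((differentiable_id.mul_const m₁).const_add A)).mul
    ((diff_aeval (p j)).comp ((differentiable_id.mul_const m₂).const_add B))

private lemma cdth_diff (p : ℕ → Polynomial ℝ) (t : ℝ) (A B m₁ m₂ : ℂ) :
    Differentiable ℂ (fun ζ => CDth p t (A + ζ * m₁) (B + ζ * m₂)) := by
  unfold CDth
  exact (cdh_diff p _ A B m₁ m₂).add
    (differentiable_const _ |>.mul ((cdh_diff p _ A B m₁ m₂).sub (cdh_diff p _ A B m₁ m₂)))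

private lemma cont_cd (p : ℕ → Polynomial ℝ) (n : ℕ) :
    Continuous fun zw : ℂ × ℂ => CD p n zw.1 zw.2 := by
  unfold CD
  apply continuous_finset_sum
  intro j _
  exact ((cont_aeval (p j)).comp continuous_fst).mul
    (Complex.continuous_conj.comp ((cont_aeval (p j)).comp continuous_snd))

private lemma cont_cdt (p : ℕ → Polynomial ℝ) (t : ℝ) :
    Continuous fun zw : ℂ × ℂ => CDt p t zw.1 zw.2 := by
  unfold CDt
  exact (cont_cd p _).add (continuous_const.mul ((cont_cd p _).sub (cont_cd p _)))

private lemma cont_cdscaledT (p : ℕ → Polynomial ℝ) (ξ : ℝ) (h : ℝ → ℝ) (t : ℝ) :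
    Continuous (CDscaledT p ξ h t) := by
  have h1 : Continuous fun zw : ℂ × ℂ => ((ξ : ℂ) + zw.1 / (h (CDdiagT p t ξ) : ℂ),
      (ξ : ℂ) + zw.2 / (h (CDdiagT p t ξ) : ℂ)) :=
    Continuous.prodMk
      (continuous_const.add (continuous_fst.div_const _))
      (continuous_const.add (continuous_snd.div_const _))
  have h2 := ((cont_cdt p t).comp h1).div_const ((CDdiagT p t ξ : ℝ) : ℂ)
  exact h2

private lemma cont_cdscaledN (p : ℕ → Polynomial ℝ) (ξ : ℝ) (h : ℝ → ℝ) (n : ℕ) :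
    Continuous (CDscaledN p ξ h n) := by
  have h1 : Continuous fun zw : ℂ × ℂ => ((ξ : ℂ) + zw.1 / (h (CDdiag p n ξ) : ℂ),
      (ξ : ℂ) + zw.2 / (h (CDdiag p n ξ) : ℂ)) :=
    Continuous.prodMk
      (continuous_const.add (continuous_fst.div_const _))
      (continuous_const.add (continuous_snd.div_const _))
  have h2 := ((cont_cd p n).comp h1).div_const ((CDdiag p n ξ : ℝ) : ℂ)
  exact h2

private lemma cd_herm (p : ℕ → Polynomial ℝ) (n : ℕ) (z w : ℂ) :
    CD p n z w = conj (CD p n w z) := by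
  unfold CD
  rw [map_sum]
  refine Finset.sum_congr rfl fun j _ => ?_
  rw [map_mul, Complex.conj_conj, mul_comm]

private lemma cdt_herm (p : ℕ → Polynomial ℝ) (t : ℝ) (z w : ℂ) :
    CDt p t z w = conj (CDt p t w z) := by
  unfold CDt
  rw [map_add, map_mul, map_sub, Complex.conj_ofReal, ← cd_herm, ← cd_herm]

private lemma cdscaledT_herm (p : ℕ → Polynomial ℝ) (ξ : ℝ) (h : ℝ → ℝ) (t : ℝ) (z w : ℂ) :
    CDscaledT p ξ h t (z, w) = conj (CDscaledT p ξ h t (w, z)) := by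
  unfold CDscaledT
  rw [map_div₀, Complex.conj_ofReal, ← cdt_herm]

private lemma cd_diag_ofReal (p : ℕ → Polynomial ℝ) (n : ℕ) (ξ : ℝ) :
    CD p n (ξ : ℂ) (ξ : ℂ) = ((CDdiag p n ξ : ℝ) : ℂ) := by
  unfold CD CDdiag
  push_cast
  refine Finset.sum_congr rfl fun j _ => ?_
  rw [aeval_ofReal', Complex.conj_ofReal]
  push_cast
  ring

private lemma cdt_diag_ofReal (p : ℕ → Polynomial ℝ) (t : ℝ) (ξ : ℝ) :
    CDt p t (ξ : ℂ) (ξ : ℂ) = ((CDdiagT p t ξ : ℝ) : ℂ) := by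
  unfold CDt CDdiagT
  rw [cd_diag_ofReal, cd_diag_ofReal]
  push_cast
  ring

private lemma cdt_formula (p : ℕ → Polynomial ℝ) (t : ℝ) (n : ℕ) (hfl : ⌊t⌋₊ = n) (z w : ℂ) :
    CDt p t z w = CD p n z w
      + ((t - n : ℝ) : ℂ) * (aeval z (p n) * conj (aeval w (p n))) := by
  unfold CDt
  rw [hfl]
  have : CD p (n + 1) z w = CD p n z w + aeval z (p n) * conj (aeval w (p n)) :=
    Finset.sum_range_succ _ n
  rw [this]
  ring

private lemma cdscaledT_nat (p : ℕ → Polynomial ℝ) (ξ : ℝ) (h : ℝ → ℝ) (n : ℕ) :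
    CDscaledT p ξ h (n : ℝ) = CDscaledN p ξ h n := by
  have hd : CDdiagT p (n : ℝ) ξ = CDdiag p n ξ := by
    unfold CDdiagT
    rw [Nat.floor_natCast]
    simp
  funext zw
  unfold CDscaledT CDscaledN
  rw [hd]
  congr 1
  unfold CDt
  rw [Nat.floor_natCast]
  simp


private lemma unif_index_comp {α β : Type*} [UniformSpace β] {F : ℝ → α → β} {f : α → β}
    {S : Set α} (hF : TendstoUniformlyOn F f atTop S) {σ : ℕ → ℝ}
    (hσ : Tendsto σ atTop atTop) :
    TendstoUniformlyOn (fun j => F (σ j)) f atTop S :=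
  fun u hu => hσ.eventually (hF u hu)


/-- Lemma 8.2: a regularly varying scaling limit of the interpolated CD kernel with a
nontrivial limit kernel forces subexponential growth `K(n+1,ξ,ξ)/K(n,ξ,ξ) → 1`. -/
theorem statement11
    (μ : Measure ℝ) (p : ℕ → Polynomial ℝ)
    (hsupp : HasInfiniteSupport μ) (hmom : HasFiniteMoments μ)
    (horth : IsOrthonormalPolys μ p)
    (ξ : ℝ) (h : ℝ → ℝ) (ρ : ℝ) (hρ : 0 < ρ) (hreg : RegularlyVarying h ρ)
    (Kinf : ℂ → ℂ → ℂ) (hK : ¬ ∀ z w : ℂ, Kinf z w = 1)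
    (hlim : TendstoUnifCompacts (atTop : Filter ℝ) (CDscaledT p ξ h)
      (fun zw => Kinf zw.1 zw.2)) :
    NevaiCond p ξ := by
  by_contra hnev
  set K : ℕ → ℝ := fun n => CDdiag p n ξ with hK_def
  have hKeq : ∀ n, CDdiag p n ξ = K n := fun _ => rfl
  -- positivity of the kernel diagonal
  have hp0 : 0 < (p 0).eval ξ ^ 2 := by
    have hdeg : (p 0).degree = (0 : WithBot ℕ) := by
      have := horth.1 0
      simpa using this
    have hC : p 0 = Polynomial.C ((p 0).coeff 0) :=
      Polynomial.eq_C_of_degree_le_zero (le_of_eq hdeg)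
    have hne : (p 0).coeff 0 ≠ 0 := by
      intro h0
      have hz : p 0 = 0 := by rw [hC, h0, map_zero]
      rw [hz] at hdeg
      simp at hdeg
    have he : (p 0).eval ξ = (p 0).coeff 0 := by
      conv_lhs => rw [hC]
      simp
    rw [he]
    exact sq_pos_of_ne_zero hne
  have hKmono : Monotone K := by
    apply monotone_nat_of_le_succ
    intro n
    have hs : K (n + 1) = K n + (p n).eval ξ ^ 2 := Finset.sum_range_succ _ n
    nlinarith [sq_nonneg ((p n).eval ξ)]
  have hK1 : ∀ n, 1 ≤ n → 0 < K n := by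
    intro n hn
    have h1 : K 1 = (p 0).eval ξ ^ 2 := by
      show CDdiag p 1 ξ = _
      unfold CDdiag
      simp
    have h2 := hKmono hn
    rw [h1] at h2
    linarith
  have hdiagT_pos : ∀ t : ℝ, 1 ≤ t → 0 < CDdiagT p t ξ := by
    intro t ht
    have h0t : (0 : ℝ) ≤ t := by linarith
    have hfl : 1 ≤ ⌊t⌋₊ := Nat.le_floor (by exact_mod_cast ht)
    have h1 : K ⌊t⌋₊ ≤ K (⌊t⌋₊ + 1) := hKmono (Nat.le_succ _)
    have h2 : 0 ≤ t - ⌊t⌋₊ := by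
      have := Nat.floor_le h0t
      linarith
    have h3 := hK1 _ hfl
    unfold CDdiagT
    rw [hKeq, hKeq]
    nlinarith
  -- the diagonal tends to infinity
  have hKtop : Tendsto K atTop atTop := by
    by_cases hbdd : BddAbove (Set.range K)
    · exfalso
      have hsup := tendsto_atTop_ciSup hKmono hbdd
      have hL : 0 < ⨆ n, K n := lt_of_lt_of_le (hK1 1 le_rfl) (le_ciSup hbdd 1)
      have h2 : Tendsto (fun n => K (n + 1)) atTop (𝓝 (⨆ n, K n)) :=
        hsup.comp (tendsto_add_atTop_nat 1)
      have h3 := h2.div hsup (ne_of_gt hL)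
      rw [div_self (ne_of_gt hL)] at h3
      exact hnev h3
    · exact tendsto_atTop_atTop_of_monotone' hKmono hbdd
  -- extraction of a subsequence with big jumps
  obtain ⟨ε, hε, hfreq⟩ : ∃ ε > (0:ℝ), ∃ᶠ n in atTop, (1 + ε) * K n ≤ K (n + 1) ∧ 1 ≤ n := by
    have hn' := hnev
    unfold NevaiCond at hn'
    rw [Metric.tendsto_atTop] at hn'
    push_neg at hn'
    obtain ⟨ε, hεpos, hN⟩ := hn'
    refine ⟨ε, hεpos, ?_⟩
    rw [Filter.frequently_atTop]
    intro N
    obtain ⟨n, hn1, hn2⟩ := hN (max N 1)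
    have hn1' : 1 ≤ n := le_trans (le_max_right _ _) hn1
    refine ⟨n, le_trans (le_max_left _ _) hn1, ?_, hn1'⟩
    have hKn := hK1 n hn1'
    have hr1 : 1 ≤ K (n + 1) / K n := (one_le_div hKn).2 (hKmono (Nat.le_succ n))
    have hd : dist (CDdiag p (n + 1) ξ / CDdiag p n ξ) 1
        = K (n + 1) / K n - 1 := by
      rw [hKeq, hKeq, Real.dist_eq, abs_of_nonneg]
      linarith
    rw [hd] at hn2
    have h5 : 1 + ε ≤ K (n + 1) / K n := by linarith
    calc (1 + ε) * K n ≤ (K (n + 1) / K n) * K n :=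
          mul_le_mul_of_nonneg_right h5 hKn.le
      _ = K (n + 1) := div_mul_cancel₀ _ hKn.ne'
  obtain ⟨φ, hφmono, hφ⟩ := Filter.extraction_of_frequently_atTop hfreq
  -- pointwise limits
  have hpin : ∀ z w : ℂ, Tendsto (fun t => CDscaledT p ξ h t (z, w)) atTop (𝓝 (Kinf z w)) := by
    intro z w
    have := (hlim {(z, w)} isCompact_singleton).tendsto_at (Set.mem_singleton _)
    simpa using this
  have hK00 : Kinf 0 0 = 1 := by
    have h1 := hpin 0 0
    have h2 : ∀ᶠ t : ℝ in atTop, CDscaledT p ξ h t (0, 0) = 1 := by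
      filter_upwards [eventually_ge_atTop (1 : ℝ)] with t ht
      have hd := hdiagT_pos t ht
      show CDt p t ((ξ:ℂ) + 0 / _) ((ξ:ℂ) + 0 / _) / _ = 1
      rw [zero_div, add_zero, cdt_diag_ofReal]
      exact div_self (by exact_mod_cast hd.ne')
    exact tendsto_nhds_unique h1
      (tendsto_const_nhds.congr' (by filter_upwards [h2] with t ht using ht.symm))
  have hherm : ∀ z w : ℂ, Kinf z w = conj (Kinf w z) := by
    intro z w
    have h1 := hpin z w
    have h2 := (Complex.continuous_conj.tendsto _).comp (hpin w z)
    exact tendsto_nhds_unique h1 (h2.congr fun t => (cdscaledT_herm p ξ h t z w).symm)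
  -- the sliced limit function
  set Ψ : ℂ → ℂ → ℂ → ℂ := fun z w ζ => Kinf (ζ * z) ((starRingEnd ℂ) ζ * w) with hΨ_def
  have hΨreal : ∀ (z w : ℂ) (x : ℝ), Ψ z w ((x : ℝ) : ℂ) = Kinf ((x : ℂ) * z) ((x : ℂ) * w) := by
    intro z w x
    simp only [hΨ_def, Complex.conj_ofReal]
  have hΨdiff : ∀ z w : ℂ, Differentiable ℂ (Ψ z w) := by
    intro z w
    have hball : ∀ R : ℝ, 0 < R → DifferentiableOn ℂ (Ψ z w) (Metric.ball 0 R) := by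
      intro R hR
      set g : ℂ → ℂ × ℂ := fun ζ => (ζ * z, (starRingEnd ℂ) ζ * w) with hg_def
      have hgcont : Continuous g :=
        (continuous_id.mul continuous_const).prodMk
          (Complex.continuous_conj.mul continuous_const)
      have hScpt : IsCompact (g '' Metric.closedBall 0 R) :=
        (isCompact_closedBall 0 R).image hgcont
      have h1 := (hlim _ hScpt).comp g
      have h2 : TendstoUniformlyOn (fun t => CDscaledT p ξ h t ∘ g) (Ψ z w) atTop
          (Metric.closedBall 0 R) :=
        h1.mono (Set.subset_preimage_image g _)
      have h3 : TendstoLocallyUniformlyOn (fun t => CDscaledT p ξ h t ∘ g) (Ψ z w) atTop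
          (Metric.ball 0 R) :=
        h2.tendstoLocallyUniformlyOn.mono Metric.ball_subset_closedBall
      apply h3.differentiableOn ?_ Metric.isOpen_ball
      apply Eventually.of_forall
      intro t
      apply Differentiable.differentiableOn
      have hfe : (CDscaledT p ξ h t ∘ g) = fun ζ =>
          CDth p t ((ξ:ℂ) + ζ * (z / ((h (CDdiagT p t ξ) : ℝ) : ℂ)))
            ((ξ:ℂ) + ζ * ((starRingEnd ℂ) w / ((h (CDdiagT p t ξ) : ℝ) : ℂ)))
            / ((CDdiagT p t ξ : ℝ) : ℂ) := by
        funext ζ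
        show CDscaledT p ξ h t (ζ * z, (starRingEnd ℂ) ζ * w) = _
        unfold CDscaledT
        rw [cdt_eq_cdth]
        congr 2
        · rw [mul_div_assoc]
        · simp only [map_add, map_mul, map_div₀, Complex.conj_conj, Complex.conj_ofReal]
          rw [mul_div_assoc]
      rw [hfe]
      exact (cdth_diff p t _ _ _ _).div_const _
    intro ζ0
    have hmem : ζ0 ∈ Metric.ball (0:ℂ) (‖ζ0‖ + 1) := by
      have hd : dist ζ0 0 = ‖ζ0‖ := by simp
      simp only [Metric.mem_ball, hd]
      linarith
    exact ((hball _ (by positivity)) ζ0 hmem).differentiableAt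
      (Metric.isOpen_ball.mem_nhds hmem)
  -- the key identity for c in the small interval
  have hstar : ∀ c : ℝ, 1 < c → c < 1 + ε → ∀ z w : ℂ,
      ((c:ℂ) - 1) * ((c:ℂ) * Kinf z w
          - Kinf (((c ^ (-ρ) : ℝ) : ℂ) * z) (((c ^ (-ρ) : ℝ) : ℂ) * w)) =
        ((c:ℂ) * Kinf z 0 - Kinf (((c ^ (-ρ) : ℝ) : ℂ) * z) 0) *
          ((c:ℂ) * Kinf 0 w - Kinf 0 (((c ^ (-ρ) : ℝ) : ℂ) * w)) := by
    intro c hc1 hc2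
    have hc0 : (0:ℝ) < c := lt_trans one_pos hc1
    have hKjpos : ∀ j, 0 < K (φ j) := fun j => hK1 _ (hφ j).2
    have hKjtop : Tendsto (fun j => K (φ j)) atTop atTop := hKtop.comp hφmono.tendsto_atTop
    have hgap : ∀ j, ε * K (φ j) ≤ K (φ j + 1) - K (φ j) := by
      intro j
      have := (hφ j).1
      nlinarith [hKjpos j]
    have hgappos : ∀ j, 0 < K (φ j + 1) - K (φ j) :=
      fun j => lt_of_lt_of_le (mul_pos hε (hKjpos j)) (hgap j)
    set τ : ℕ → ℝ := fun j => (c - 1) * K (φ j) / (K (φ j + 1) - K (φ j)) with hτ_def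
    have hτpos : ∀ j, 0 < τ j :=
      fun j => div_pos (mul_pos (by linarith) (hKjpos j)) (hgappos j)
    have hτlt : ∀ j, τ j < 1 := by
      intro j
      rw [hτ_def]
      rw [div_lt_one (hgappos j)]
      calc (c - 1) * K (φ j) < ε * K (φ j) :=
            mul_lt_mul_of_pos_right (by linarith) (hKjpos j)
        _ ≤ _ := hgap j
    set t : ℕ → ℝ := fun j => (φ j : ℝ) + τ j with ht_def
    have hfloor : ∀ j, ⌊t j⌋₊ = φ j := by
      intro j
      have h2 : (0:ℝ) ≤ (φ j : ℝ) := Nat.cast_nonneg _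
      have h1 := hτpos j
      have h3 := hτlt j
      have h0 : (0:ℝ) ≤ t j := by simp only [ht_def]; linarith
      rw [Nat.floor_eq_iff h0]
      constructor
      · simp only [ht_def]; linarith
      · simp only [ht_def]; push_cast; linarith
    have htK : ∀ j, CDdiagT p (t j) ξ = c * K (φ j) := by
      intro j
      unfold CDdiagT
      rw [hfloor j]
      have h1 : t j - ((φ j : ℕ) : ℝ) = τ j := by simp only [ht_def]; ring
      rw [hKeq, hKeq, h1, hτ_def]
      rw [div_mul_cancel₀ _ (hgappos j).ne']
      ring
    have httop : Tendsto t atTop atTop := by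
      apply tendsto_atTop_mono (fun j => ?_)
        (tendsto_natCast_atTop_atTop.comp hφmono.tendsto_atTop)
      show ((φ j : ℕ) : ℝ) ≤ t j
      simp only [ht_def]
      linarith [hτpos j]
    have hKjpos' : ∀ j, 0 < c * K (φ j) := fun j => mul_pos hc0 (hKjpos j)
    have hhspos : ∀ j, 0 < h (K (φ j)) := fun j => hreg.1 _ (hKjpos j)
    have hhscpos : ∀ j, 0 < h (c * K (φ j)) := fun j => hreg.1 _ (hKjpos' j)
    have hrat : Tendsto (fun j => h (K (φ j)) / h (c * K (φ j))) atTop (𝓝 (c ^ (-ρ))) := by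
      have h1 := (hreg.2 c hc0).comp hKjtop
      have h2 := h1.inv₀ (ne_of_gt (Real.rpow_pos_of_pos hc0 ρ))
      rw [Real.rpow_neg hc0.le]
      refine h2.congr fun j => ?_
      simp only [Function.comp_apply]
      rw [inv_div]
    -- the rank-one sequences and their limits
    have hG : ∀ z w : ℂ, Tendsto (fun j => ((τ j : ℝ) : ℂ) *
        (aeval ((ξ:ℂ) + z / ((h (c * K (φ j)) : ℝ) : ℂ)) (p (φ j)) *
          conj (aeval ((ξ:ℂ) + w / ((h (c * K (φ j)) : ℝ) : ℂ)) (p (φ j))))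
          / ((K (φ j) : ℝ) : ℂ))
        atTop (𝓝 ((c:ℂ) * Kinf z w
          - Kinf (((c ^ (-ρ) : ℝ) : ℂ) * z) (((c ^ (-ρ) : ℝ) : ℂ) * w))) := by
      intro z w
      have hS1 : Tendsto (fun j => CDt p (t j) ((ξ:ℂ) + z / ((h (c * K (φ j)) : ℝ) : ℂ))
          ((ξ:ℂ) + w / ((h (c * K (φ j)) : ℝ) : ℂ)) / ((c * K (φ j) : ℝ) : ℂ))
          atTop (𝓝 (Kinf z w)) := by
        have h1 := (hpin z w).comp httop
        refine h1.congr fun j => ?_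
        show CDscaledT p ξ h (t j) (z, w) = _
        unfold CDscaledT
        rw [htK j]
      have hS2 : Tendsto (fun j => CD p (φ j) ((ξ:ℂ) + z / ((h (c * K (φ j)) : ℝ) : ℂ))
          ((ξ:ℂ) + w / ((h (c * K (φ j)) : ℝ) : ℂ)) / ((K (φ j) : ℝ) : ℂ))
          atTop (𝓝 (Kinf (((c ^ (-ρ) : ℝ) : ℂ) * z) (((c ^ (-ρ) : ℝ) : ℂ) * w))) := by
        set tg : ℂ × ℂ := (((c ^ (-ρ) : ℝ) : ℂ) * z, ((c ^ (-ρ) : ℝ) : ℂ) * w) with htg_def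
        set g : ℕ → ℂ × ℂ := fun j =>
          (((h (K (φ j)) / h (c * K (φ j)) : ℝ) : ℂ) * z,
            ((h (K (φ j)) / h (c * K (φ j)) : ℝ) : ℂ) * w) with hg_def
        have hgto : Tendsto g atTop (𝓝 tg) := by
          have hcast := (Complex.continuous_ofReal.tendsto _).comp hrat
          exact (hcast.mul_const z).prodMk_nhds (hcast.mul_const w)
        have hScpt : IsCompact (Metric.closedBall tg 1) := isCompact_closedBall _ _
        have hunif : TendstoUniformlyOn (fun j => CDscaledN p ξ h (φ j))
            (fun zw => Kinf zw.1 zw.2) atTop (Metric.closedBall tg 1) := by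
          have h2 : TendstoUniformlyOn (fun j => CDscaledT p ξ h ((φ j : ℕ) : ℝ))
              (fun zw => Kinf zw.1 zw.2) atTop (Metric.closedBall tg 1) :=
            unif_index_comp (hlim _ hScpt) (tendsto_natCast_atTop_atTop.comp hφmono.tendsto_atTop)
          exact h2.congr (Eventually.of_forall fun j => by
            rw [cdscaledT_nat]
            exact fun x _ => rfl)
        have hcont : ContinuousOn (fun zw : ℂ × ℂ => Kinf zw.1 zw.2) (Metric.closedBall tg 1) :=
          hunif.continuousOn (Eventually.of_forall fun j =>
            (cont_cdscaledN p ξ h (φ j)).continuousOn).frequently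
        have hmem : ∀ᶠ j in atTop, g j ∈ Metric.closedBall tg 1 :=
          hgto.eventually_mem (Metric.closedBall_mem_nhds _ one_pos)
        have hgS : Tendsto g atTop (𝓝[Metric.closedBall tg 1] tg) :=
          tendsto_nhdsWithin_iff.2 ⟨hgto, hmem⟩
        have h3 := hunif.tendsto_comp
          (hcont.continuousWithinAt (Metric.mem_closedBall_self zero_le_one)) hgS
        refine h3.congr fun j => ?_
        show CDscaledN p ξ h (φ j) (g j) = _
        unfold CDscaledN
        have hne1 : ((h (K (φ j)) : ℝ) : ℂ) ≠ 0 := by exact_mod_cast (hhspos j).ne'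
        have hne2 : ((h (c * K (φ j)) : ℝ) : ℂ) ≠ 0 := by exact_mod_cast (hhscpos j).ne'
        simp only [hKeq, hg_def]
        have hz1 : ((h (K (φ j)) / h (c * K (φ j)) : ℝ) : ℂ) * z / ((h (K (φ j)) : ℝ) : ℂ)
            = z / ((h (c * K (φ j)) : ℝ) : ℂ) := by
          push_cast
          field_simp
        have hw1 : ((h (K (φ j)) / h (c * K (φ j)) : ℝ) : ℂ) * w / ((h (K (φ j)) : ℝ) : ℂ)
            = w / ((h (c * K (φ j)) : ℝ) : ℂ) := by
          push_cast
          field_simp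
        rw [hz1, hw1]
      have hcomb := (hS1.const_mul ((c:ℝ):ℂ)).sub hS2
      refine hcomb.congr fun j => ?_
      have hKC : ((K (φ j) : ℝ) : ℂ) ≠ 0 := by exact_mod_cast (hKjpos j).ne'
      have hcC : ((c:ℝ) : ℂ) ≠ 0 := by exact_mod_cast hc0.ne'
      have e1 : CDt p (t j) ((ξ:ℂ) + z / ((h (c * K (φ j)) : ℝ) : ℂ))
          ((ξ:ℂ) + w / ((h (c * K (φ j)) : ℝ) : ℂ))
          = CD p (φ j) ((ξ:ℂ) + z / ((h (c * K (φ j)) : ℝ) : ℂ))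
              ((ξ:ℂ) + w / ((h (c * K (φ j)) : ℝ) : ℂ))
            + ((τ j : ℝ) : ℂ) *
              (aeval ((ξ:ℂ) + z / ((h (c * K (φ j)) : ℝ) : ℂ)) (p (φ j)) *
                conj (aeval ((ξ:ℂ) + w / ((h (c * K (φ j)) : ℝ) : ℂ)) (p (φ j)))) := by
        rw [cdt_formula p (t j) (φ j) (hfloor j)]
        have : t j - ((φ j : ℕ) : ℝ) = τ j := by simp only [ht_def]; ring
        rw [this]
      rw [e1]
      push_cast
      field_simp
      ring
    -- rank-one identity in the limit
    intro z w
    have huniq := tendsto_nhds_unique ((hG z w).mul (hG 0 0))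
      (((hG z 0).mul (hG 0 w)).congr fun j => by ring)
    simp only [mul_zero, hK00, mul_one] at huniq
    linear_combination huniq
  -- analytic continuation to all c > 0
  have hstar' : ∀ (z w : ℂ) (c : ℝ), 0 < c →
      ((c:ℂ) - 1) * ((c:ℂ) * Kinf z w
          - Kinf (((c ^ (-ρ) : ℝ) : ℂ) * z) (((c ^ (-ρ) : ℝ) : ℂ) * w)) =
        ((c:ℂ) * Kinf z 0 - Kinf (((c ^ (-ρ) : ℝ) : ℂ) * z) 0) *
          ((c:ℂ) * Kinf 0 w - Kinf 0 (((c ^ (-ρ) : ℝ) : ℂ) * w)) := by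
    intro z w
    set E : ℂ → ℂ := fun ζ => Complex.exp (-(ρ:ℂ) * Complex.log ζ) with hE_def
    have hEreal : ∀ x : ℝ, 0 < x → E ((x : ℝ) : ℂ) = ((x ^ (-ρ) : ℝ) : ℂ) := by
      intro x hx
      simp only [hE_def]
      rw [← Complex.ofReal_log hx.le, Real.rpow_def_of_pos hx, Complex.ofReal_exp]
      congr 1
      push_cast
      ring
    set Φ : ℂ → ℂ := fun ζ => (ζ - 1) * (ζ * Kinf z w - Ψ z w (E ζ)) -
      (ζ * Kinf z 0 - Ψ z 0 (E ζ)) * (ζ * Kinf 0 w - Ψ 0 w (E ζ)) with hΦ_def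
    have hUopen : IsOpen {ζ : ℂ | 0 < ζ.re} := isOpen_lt continuous_const Complex.continuous_re
    have hUconn : IsPreconnected {ζ : ℂ | 0 < ζ.re} := (convex_halfSpace_re_gt 0).isPreconnected
    have hEdiff : ∀ ζ ∈ {ζ : ℂ | 0 < ζ.re}, DifferentiableAt ℂ E ζ := by
      intro ζ hζ
      have hlog := Complex.differentiableAt_log (Complex.mem_slitPlane_iff.2 (Or.inl hζ))
      have h1 : DifferentiableAt ℂ (fun w : ℂ => -(ρ:ℂ) * Complex.log w) ζ :=
        (differentiableAt_const _).mul hlog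
      have h2 : DifferentiableAt ℂ (Complex.exp ∘ fun w : ℂ => -(ρ:ℂ) * Complex.log w) ζ :=
        DifferentiableAt.comp ζ (Complex.differentiable_exp (𝕜 := ℂ) _) h1
      exact h2
    have hΦdiff : DifferentiableOn ℂ Φ {ζ : ℂ | 0 < ζ.re} := by
      intro ζ hζ
      apply DifferentiableAt.differentiableWithinAt
      have hE1 := hEdiff ζ hζ
      have d1 : DifferentiableAt ℂ (fun ζ => Ψ z w (E ζ)) ζ :=
        ((hΨdiff z w) (E ζ)).comp ζ hE1
      have d2 : DifferentiableAt ℂ (fun ζ => Ψ z 0 (E ζ)) ζ :=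
        ((hΨdiff z 0) (E ζ)).comp ζ hE1
      have d3 : DifferentiableAt ℂ (fun ζ => Ψ 0 w (E ζ)) ζ :=
        ((hΨdiff 0 w) (E ζ)).comp ζ hE1
      simp only [hΦ_def]
      apply DifferentiableAt.sub
      · exact ((differentiableAt_id.sub_const 1).mul
          ((differentiableAt_id.mul_const _).sub d1))
      · exact ((differentiableAt_id.mul_const _).sub d2).mul
          ((differentiableAt_id.mul_const _).sub d3)
    have hval : ∀ x : ℝ, 1 < x → x < 1 + ε → Φ ((x : ℝ) : ℂ) = 0 := by
      intro x hx1 hx2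
      have hx0 : (0:ℝ) < x := by linarith
      have hh := hstar x hx1 hx2 z w
      simp only [hΦ_def]
      rw [hEreal x hx0, hΨreal z w _, hΨreal z 0 _, hΨreal 0 w _]
      simp only [mul_zero, zero_mul]
      rw [sub_eq_zero]
      exact hh
    have hΦeq : Set.EqOn Φ 0 {ζ : ℂ | 0 < ζ.re} := by
      have hAnal : AnalyticOnNhd ℂ Φ {ζ : ℂ | 0 < ζ.re} := hΦdiff.analyticOnNhd hUopen
      have hc₀mem : ((1 + ε/2 : ℝ) : ℂ) ∈ {ζ : ℂ | 0 < ζ.re} := by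
        simp only [Set.mem_setOf_eq, Complex.ofReal_re]
        linarith
      apply hAnal.eqOn_zero_of_preconnected_of_frequently_eq_zero hUconn hc₀mem
      have hseq : Tendsto (fun k : ℕ => ((1 + ε/2 + ε/4 * (1/((k:ℝ)+1)) : ℝ) : ℂ)) atTop
          (𝓝[≠] ((1 + ε/2 : ℝ) : ℂ)) := by
        rw [tendsto_nhdsWithin_iff]
        constructor
        · have h0 : Tendsto (fun k : ℕ => (1 + ε/2 + ε/4 * (1/((k:ℝ)+1)) : ℝ)) atTop
              (𝓝 (1 + ε/2)) := by
            have h1 := tendsto_one_div_add_atTop_nhds_zero_nat (𝕜 := ℝ)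
            have h2 := (h1.const_mul (ε/4)).const_add (1 + ε/2)
            simpa using h2
          exact (Complex.continuous_ofReal.tendsto _).comp h0
        · apply Eventually.of_forall
          intro k
          simp only [Set.mem_compl_iff, Set.mem_singleton_iff]
          intro hcontra
          have h4 : (1 + ε/2 + ε/4 * (1/((k:ℝ)+1)) : ℝ) = 1 + ε/2 :=
            Complex.ofReal_injective hcontra
          have h5 : (0:ℝ) < ε/4 * (1/((k:ℝ)+1)) := by positivity
          linarith
      apply hseq.frequently
      apply Filter.Frequently.of_forall
      intro k
      apply hval
      · have : (0:ℝ) < ε/4 * (1/((k:ℝ)+1)) := by positivity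
        linarith
      · have h1 : ε/4 * (1/((k:ℝ)+1)) ≤ ε/4 * 1 := by
          apply mul_le_mul_of_nonneg_left _ (by positivity)
          rw [div_le_one (by positivity)]
          linarith [(Nat.cast_nonneg k : (0:ℝ) ≤ (k:ℝ))]
        linarith
    intro c hc
    have hcU : ((c : ℝ) : ℂ) ∈ {ζ : ℂ | 0 < ζ.re} := by
      simp only [Set.mem_setOf_eq, Complex.ofReal_re]
      exact hc
    have h0 := hΦeq hcU
    simp only [hΦ_def, Pi.zero_apply] at h0
    rw [hEreal c hc, hΨreal z w _, hΨreal z 0 _, hΨreal 0 w _] at h0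
    simp only [mul_zero, zero_mul] at h0
    rw [← sub_eq_zero]
    exact h0
  -- limits as c → ∞
  have hu0C : Tendsto (fun c : ℝ => ((c ^ (-ρ) : ℝ) : ℂ)) atTop (𝓝 0) := by
    have h1 := tendsto_rpow_neg_atTop hρ
    have h2 := (Complex.continuous_ofReal.tendsto 0).comp h1
    simpa [Function.comp_def] using h2
  have hΨ0 : ∀ z w : ℂ, Tendsto (fun c : ℝ =>
      Kinf (((c ^ (-ρ) : ℝ) : ℂ) * z) (((c ^ (-ρ) : ℝ) : ℂ) * w)) atTop (𝓝 1) := by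
    intro z w
    have h2 := ((hΨdiff z w).continuous.tendsto 0).comp hu0C
    have h3 : Ψ z w 0 = 1 := by
      simp only [hΨ_def]
      simp [hK00]
    rw [h3] at h2
    exact h2.congr fun c => hΨreal z w _
  have hcinv : Tendsto (fun c : ℝ => ((c : ℝ) : ℂ)⁻¹) atTop (𝓝 0) := by
    have h1 := (tendsto_inv_atTop_zero : Tendsto (fun r : ℝ => r⁻¹) atTop (𝓝 0))
    have h2 := (Complex.continuous_ofReal.tendsto 0).comp h1
    simpa [Function.comp_def, Complex.ofReal_inv] using h2
  have hfact : ∀ z w : ℂ, Kinf z w = Kinf z 0 * Kinf 0 w := by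
    intro z w
    set L : ℝ → ℂ := fun c => (1 - ((c : ℝ) : ℂ)⁻¹) *
        (Kinf z w - Kinf (((c ^ (-ρ) : ℝ) : ℂ) * z) (((c ^ (-ρ) : ℝ) : ℂ) * w)
          * ((c : ℝ) : ℂ)⁻¹) with hL_def
    set R : ℝ → ℂ := fun c =>
        (Kinf z 0 - Kinf (((c ^ (-ρ) : ℝ) : ℂ) * z) 0 * ((c : ℝ) : ℂ)⁻¹) *
        (Kinf 0 w - Kinf 0 (((c ^ (-ρ) : ℝ) : ℂ) * w) * ((c : ℝ) : ℂ)⁻¹) with hR_def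
    have hLlim : Tendsto L atTop (𝓝 (Kinf z w)) := by
      have l1 : Tendsto (fun c : ℝ => (1 : ℂ) - ((c : ℝ) : ℂ)⁻¹) atTop (𝓝 1) := by
        simpa using tendsto_const_nhds.sub hcinv
      have l2 := (hΨ0 z w).mul hcinv
      rw [mul_zero] at l2
      have l3 : Tendsto (fun c : ℝ => Kinf z w
          - Kinf (((c ^ (-ρ) : ℝ) : ℂ) * z) (((c ^ (-ρ) : ℝ) : ℂ) * w) * ((c : ℝ) : ℂ)⁻¹)
          atTop (𝓝 (Kinf z w)) := by
        simpa using tendsto_const_nhds.sub l2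
      simpa [hL_def] using l1.mul l3
    have hRlim : Tendsto R atTop (𝓝 (Kinf z 0 * Kinf 0 w)) := by
      have l2 := ((hΨ0 z 0).congr (fun c => by rw [mul_zero])).mul hcinv
      rw [mul_zero] at l2
      have l3 := ((hΨ0 0 w).congr (fun c => by rw [mul_zero])).mul hcinv
      rw [mul_zero] at l3
      have l4 : Tendsto (fun c : ℝ => Kinf z 0
          - Kinf (((c ^ (-ρ) : ℝ) : ℂ) * z) 0 * ((c : ℝ) : ℂ)⁻¹) atTop (𝓝 (Kinf z 0)) := by
        simpa using tendsto_const_nhds.sub l2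
      have l5 : Tendsto (fun c : ℝ => Kinf 0 w
          - Kinf 0 (((c ^ (-ρ) : ℝ) : ℂ) * w) * ((c : ℝ) : ℂ)⁻¹) atTop (𝓝 (Kinf 0 w)) := by
        simpa using tendsto_const_nhds.sub l3
      simpa [hR_def] using l4.mul l5
    have hLR : ∀ᶠ c : ℝ in atTop, L c = R c := by
      filter_upwards [eventually_gt_atTop (0:ℝ)] with c hc
      have hcC : ((c : ℝ) : ℂ) ≠ 0 := by exact_mod_cast hc.ne'
      have hh := hstar' z w c hc
      have e1 : ((c : ℝ) : ℂ)^2 * L c = ((c:ℂ) - 1) * ((c:ℂ) * Kinf z w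
          - Kinf (((c ^ (-ρ) : ℝ) : ℂ) * z) (((c ^ (-ρ) : ℝ) : ℂ) * w)) := by
        simp only [hL_def]
        field_simp
      have e2 : ((c : ℝ) : ℂ)^2 * R c =
          ((c:ℂ) * Kinf z 0 - Kinf (((c ^ (-ρ) : ℝ) : ℂ) * z) 0) *
          ((c:ℂ) * Kinf 0 w - Kinf 0 (((c ^ (-ρ) : ℝ) : ℂ) * w)) := by
        simp only [hR_def]
        field_simp
      have e3 : ((c : ℝ) : ℂ)^2 * L c = ((c : ℝ) : ℂ)^2 * R c := by
        rw [e1, e2, hh]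
      exact mul_left_cancel₀ (pow_ne_zero 2 hcC) e3
    exact tendsto_nhds_unique hLlim (hRlim.congr' (hLR.mono fun c hcc => hcc.symm))
  have hA1 : ∀ z : ℂ, Kinf z 0 = 1 := by
    intro z
    have hstep : ∀ c : ℝ, 0 < c → Kinf (((c ^ (-ρ) : ℝ) : ℂ) * z) 0 = Kinf z 0 := by
      intro c hc
      have hcC : ((c : ℝ) : ℂ) ≠ 0 := by exact_mod_cast hc.ne'
      have hh := hstar' z z c hc
      rw [hfact z z, hfact (((c ^ (-ρ) : ℝ) : ℂ) * z) (((c ^ (-ρ) : ℝ) : ℂ) * z)] at hh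
      have h2 : ((c : ℝ) : ℂ) * ((Kinf z 0 - Kinf (((c ^ (-ρ) : ℝ) : ℂ) * z) 0) *
          (Kinf 0 z - Kinf 0 (((c ^ (-ρ) : ℝ) : ℂ) * z))) = 0 := by
        linear_combination -hh
      have h3 := (mul_eq_zero.1 h2).resolve_left hcC
      rcases mul_eq_zero.1 h3 with h4 | h5
      · rw [sub_eq_zero] at h4
        exact h4.symm
      · rw [sub_eq_zero] at h5
        rw [hherm 0 z, hherm 0 (((c ^ (-ρ) : ℝ) : ℂ) * z)] at h5
        have h6 := congrArg (starRingEnd ℂ) h5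
        simpa using h6.symm
    have hlimA : Tendsto (fun c : ℝ => Kinf (((c ^ (-ρ) : ℝ) : ℂ) * z) 0) atTop (𝓝 1) :=
      (hΨ0 z 0).congr fun c => by rw [mul_zero]
    have hev : ∀ᶠ c : ℝ in atTop, Kinf (((c ^ (-ρ) : ℝ) : ℂ) * z) 0 = Kinf z 0 := by
      filter_upwards [eventually_gt_atTop (0:ℝ)] with c hc using hstep c hc
    exact (tendsto_nhds_unique (hlimA.congr' hev) tendsto_const_nhds).symm
  apply hK
  intro z w
  rw [hfact z w, hA1 z, one_mul, hherm 0 w, hA1 w, map_one]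


end
end

section
/- Let H be a complex Hilbert space with inner product ⟨·,·⟩_H, let L₀ ⊆ L be linear subspaces of H, and let ⟨·,·⟩_L be an inner product on L such that ⟨x,x⟩_L = ⟨x,x⟩_H for all x ∈ L₀ and ⟨v,v⟩_H ≤ ⟨v,v⟩_L for all v ∈ L. Then every y ∈ L satisfying ⟨x,y⟩_H = 0 for all x ∈ L₀ also satisfies ⟨x,y⟩_L = 0 for all x ∈ L₀. -/
open ComplexConjugate

noncomputable section

/-- Lemma 3.2: if a subspace `L₀` of `L` is isometrically embedded and `L` is
contractively embedded in a Hilbert space `H`, then orthogonality to `L₀` in `H` implies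
orthogonality to `L₀` in `L`. -/
theorem statement19
    {H : Type*} [NormedAddCommGroup H] [InnerProductSpace ℂ H] [CompleteSpace H]
    (L₀ L : Submodule ℂ H) (hsub : L₀ ≤ L)
    (B : L → L → ℂ)
    (haddl : ∀ x y z : L, B (x + y) z = B x z + B y z)
    (haddr : ∀ x y z : L, B x (y + z) = B x y + B x z)
    (hsmull : ∀ (c : ℂ) (x y : L), B (c • x) y = conj c * B x y)
    (hsmulr : ∀ (c : ℂ) (x y : L), B x (c • y) = c * B x y)
    (hsymm : ∀ x y : L, B x y = conj (B y x))
    (hposdef : ∀ x : L, 0 ≤ (B x x).re ∧ (B x x = 0 → x = 0))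
    (hiso : ∀ (x : H) (hx : x ∈ L₀),
      B ⟨x, hsub hx⟩ ⟨x, hsub hx⟩ = (inner ℂ x x : ℂ))
    (hcontr : ∀ v : L, ((inner ℂ (v : H) (v : H) : ℂ)).re ≤ (B v v).re)
    (y : L) (hy : ∀ x ∈ L₀, (inner ℂ x (y : H) : ℂ) = 0) :
    ∀ (x : H) (hx : x ∈ L₀), B ⟨x, hsub hx⟩ y = 0 := by
  intro x hx
  set x' : L := ⟨x, hsub hx⟩ with hx'
  set a := B x' y with ha
  have hxy : (inner ℂ x (y : H) : ℂ) = 0 := hy x hx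
  have hyx : (inner ℂ ((y : L) : H) x : ℂ) = 0 := by
    rw [← inner_conj_symm, hxy]; simp
  have hC : 0 ≤ (B y y).re - ((inner ℂ ((y : L) : H) ((y : L) : H) : ℂ)).re := by
    have := hcontr y; linarith
  set C := (B y y).re - ((inner ℂ ((y : L) : H) ((y : L) : H) : ℂ)).re with hCdef
  have key : ∀ s : ℝ, 2 * s * Complex.normSq a ≤ C := by
    intro s
    set t : ℂ := -(s : ℂ) * a with ht
    set v : L := t • x' + y with hv
    have hct : conj t = -(s : ℂ) * conj a := by
      rw [ht, map_mul, map_neg, Complex.conj_ofReal]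
    have hconj : conj t * a + t * conj a = ((-2 * s * Complex.normSq a : ℝ) : ℂ) := by
      have h1 : a * conj a = (Complex.normSq a : ℂ) := Complex.mul_conj a
      calc conj t * a + t * conj a
          = -(s : ℂ) * (a * conj a) + -(s : ℂ) * (a * conj a) := by rw [hct, ht]; ring
        _ = ((-2 * s * Complex.normSq a : ℝ) : ℂ) := by rw [h1]; push_cast; ring
    have hBvv : B v v = conj t * t * (inner ℂ x x : ℂ)
        + ((-2 * s * Complex.normSq a : ℝ) : ℂ) + B y y := by
      simp only [hv, haddl, haddr, hsmull, hsmulr]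
      rw [hiso x hx, hsymm y x', ← ha, ← hconj]
      ring
    have hIvv : (inner ℂ ((v : L) : H) ((v : L) : H) : ℂ)
        = conj t * t * (inner ℂ x x : ℂ) + (inner ℂ ((y : L) : H) ((y : L) : H) : ℂ) := by
      have hvH : ((v : L) : H) = t • x + ((y : L) : H) := by
        simp [hv, hx']
      rw [hvH, inner_add_add_self, inner_smul_left, inner_smul_right, inner_smul_left,
        inner_smul_right, hxy, hyx]
      ring
    have hcv := hcontr v
    rw [hBvv, hIvv] at hcv
    simp only [Complex.add_re, Complex.ofReal_re] at hcv
    linarith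
  have hnsq : Complex.normSq a = 0 := by
    by_contra hne
    have hpos : 0 < Complex.normSq a := lt_of_le_of_ne (Complex.normSq_nonneg a) (Ne.symm hne)
    have hk := key ((C + 1) / (2 * Complex.normSq a))
    have e : 2 * ((C + 1) / (2 * Complex.normSq a)) * Complex.normSq a = C + 1 := by
      field_simp
    rw [e] at hk
    linarith
  exact Complex.normSq_eq_zero.mp hnsq

end
end
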